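/- arXiv:1108.3648 — 6 statements merged into one kernel-verified Lean document; each statement's English description precedes it below -/
import Mathlib

section
/- If u : ℤ × ℤ → ℝ satisfies u_{n+1,m+1}·u_{n,m} = u_{n+1,m}·u_{n,m+1} - 1 (the second discrete Liouville equation, with u never zero), and we set w_{n,m} = u_{n+1,m}·u_{n,m+1}, then w satisfies the first discrete Liouville equation w_{n+1,m+1}·w_{n,m} = (w_{n+1,m} - 1)(w_{n,m+1} - 1). -/
theorem stmt1 (u w : ℤ × ℤ → ℝ)
    (hu0 : ∀ n m : ℤ, u (n, m) ≠ 0)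
    (heq : ∀ n m : ℤ, u (n+1, m+1) * u (n, m) = u (n+1, m) * u (n, m+1) - 1)
    (hw : ∀ n m : ℤ, w (n, m) = u (n+1, m) * u (n, m+1)) :
    ∀ n m : ℤ, w (n+1, m+1) * w (n, m) = (w (n+1, m) - 1) * (w (n, m+1) - 1) := by
  intro n m
  have h1 := heq (n+1) m
  have h2 := heq n (m+1)
  simp only [hw]
  linear_combination (u (n+1, m+1+1) * u (n, m+1)) * h1 +
    (u (n+1+1, m) * u (n+1, m+1) - 1) * h2
end

section
/- Let α ≠ 0 and ε ≠ 0 be real, let b ≠ 0 be real. Suppose u : ℤ × ℤ → ℝ and define ũ_{n,m} = u_{n,m}(1 + ε u_{n,m+1}). Then u satisfies u_{n,m} + α u_{n+1,m} + ε(u_{n,m} u_{n,m+1} + α u_{n+1,m} u_{n+1,m+1}) = 0 at every point if and only if ũ satisfies ũ_{n,m} + α ũ_{n+1,m} = 0 at every point; in particular, if u satisfies the nonlinear equation then ũ satisfies the linear equation ũ_{n,m} + α ũ_{n+1,m} + b ũ_{n,m+1} + α b ũ_{n+1,m+1} = 0 for all n, m. -/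
theorem stmt5 (α ε b : ℝ) (hα : α ≠ 0) (hε : ε ≠ 0) (hb : b ≠ 0)
    (u ut : ℤ × ℤ → ℝ)
    (hut : ∀ n m : ℤ, ut (n, m) = u (n, m) * (1 + ε * u (n, m+1))) :
    ((∀ n m : ℤ, u (n, m) + α * u (n+1, m)
        + ε * (u (n, m) * u (n, m+1) + α * u (n+1, m) * u (n+1, m+1)) = 0)
      ↔ (∀ n m : ℤ, ut (n, m) + α * ut (n+1, m) = 0))
    ∧ ((∀ n m : ℤ, ut (n, m) + α * ut (n+1, m) = 0) →
        ∀ n m : ℤ, ut (n, m) + α * ut (n+1, m) + b * ut (n, m+1)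
          + α * b * ut (n+1, m+1) = 0) := by
  constructor
  · constructor
    · intro h n m
      rw [hut n m, hut (n+1) m]
      have := h n m
      ring_nf
      ring_nf at this
      linarith
    · intro h n m
      have := h n m
      rw [hut n m, hut (n+1) m] at this
      ring_nf
      ring_nf at this
      linarith
  · intro h n m
    have h1 := h n m
    have h2 := h n (m+1)
    have h3 : b * (ut (n, m+1) + α * ut (n+1, m+1)) = 0 := by rw [h2]; ring
    nlinarith [h3]
end

section
/- Let u : ℤ × ℤ → ℝ and define v_{n,m} = arctan(u_{n,m}). If u satisfies u_{n+1,m+1} = (u_{n+1,m} − u_{n,m+1} + (1 + u_{n+1,m}u_{n,m+1})u_{n,m}) / (1 + u_{n+1,m}u_{n,m+1} − (u_{n+1,m} − u_{n,m+1})u_{n,m}) (with nonzero denominator), then there exists an integer p with v_{n,m} + v_{n+1,m} − v_{n,m+1} − v_{n+1,m+1} = p·π. -/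
/-!
Write `A = arctan a` etc. Since `cos A = 1 / √(1 + a²)` and `sin A = a / √(1 + a²)`, the angle
`A + B` has sine and cosine proportional to `a + b` and `1 - a b`, with the same positive factor.
Hence `sin ((A + B) - (C + D))` is a positive multiple of `(a + b)(1 - c d) - (1 - a b)(c + d)`,
and the lattice equation, once its denominator is cleared, says exactly that this expression
vanishes, i.e. `tan (A + B) = tan (C + D)` in cleared form.
-/

open Real

namespace Real

theorem sin_arctan_add_arctan (a b : ℝ) :
    sin (arctan a + arctan b) = (a + b) / (√(1 + a ^ 2) * √(1 + b ^ 2)) := by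
  rw [sin_add, sin_arctan, cos_arctan, sin_arctan, cos_arctan]
  field_simp

theorem cos_arctan_add_arctan (a b : ℝ) :
    cos (arctan a + arctan b) = (1 - a * b) / (√(1 + a ^ 2) * √(1 + b ^ 2)) := by
  rw [cos_add, sin_arctan, cos_arctan, sin_arctan, cos_arctan]
  field_simp

theorem exists_arctan_add_arctan_sub_arctan_sub_arctan_eq_int_mul_pi {a b c d : ℝ}
    (h : (a + b) * (1 - c * d) = (1 - a * b) * (c + d)) :
    ∃ p : ℤ, arctan a + arctan b - arctan c - arctan d = p * π := by
  have hsin : sin ((arctan a + arctan b) - (arctan c + arctan d)) = 0 := by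
    rw [sin_sub, sin_arctan_add_arctan, cos_arctan_add_arctan, sin_arctan_add_arctan,
      cos_arctan_add_arctan, div_mul_div_comm, div_mul_div_comm, h, sub_self]
  obtain ⟨p, hp⟩ := sin_eq_zero_iff.mp hsin
  exact ⟨p, by rw [hp]; ring⟩

end Real

theorem stmt7 (u : ℤ × ℤ → ℝ) (v : ℤ × ℤ → ℝ)
    (hv : ∀ n m : ℤ, v (n, m) = Real.arctan (u (n, m)))
    (hden : ∀ n m : ℤ,
      1 + u (n+1, m) * u (n, m+1) - (u (n+1, m) - u (n, m+1)) * u (n, m) ≠ 0)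
    (heq : ∀ n m : ℤ, u (n+1, m+1) =
      (u (n+1, m) - u (n, m+1) + (1 + u (n+1, m) * u (n, m+1)) * u (n, m))
        / (1 + u (n+1, m) * u (n, m+1) - (u (n+1, m) - u (n, m+1)) * u (n, m))) :
    ∀ n m : ℤ, ∃ p : ℤ,
      v (n, m) + v (n+1, m) - v (n, m+1) - v (n+1, m+1) = p * Real.pi := by
  intro n m
  have hcleared : u (n+1, m+1) *
      (1 + u (n+1, m) * u (n, m+1) - (u (n+1, m) - u (n, m+1)) * u (n, m)) =
      u (n+1, m) - u (n, m+1) + (1 + u (n+1, m) * u (n, m+1)) * u (n, m) := by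
    rw [heq n m, div_mul_cancel₀ _ (hden n m)]
  rw [hv, hv, hv, hv]
  exact exists_arctan_add_arctan_sub_arctan_sub_arctan_eq_int_mul_pi
    (by linear_combination -hcleared)
end

section
/- Let u : ℤ × ℤ → ℝ and define v_{n,m} = arctan(u_{n,m}). If u satisfies u_{n+1,m+1} = (2u_{n+1,m} − u_{n,m+1} + u_{n,m+1}u_{n+1,m}² − (1 + 2u_{n+1,m}u_{n,m+1} − u_{n+1,m}²)u_{n,m}) / (1 + 2u_{n+1,m}u_{n,m+1} − u_{n+1,m}² + (2u_{n+1,m} − u_{n,m+1} + u_{n,m+1}u_{n+1,m}²)u_{n,m}) (with nonzero denominator), then there exists an integer p with v_{n,m} − 2v_{n+1,m} + v_{n,m+1} + v_{n+1,m+1} = p·π. -/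
open Real

/-- Helper: if tan θ = tan φ (both cosines nonzero implied by the hypotheses below),
then sin (φ - θ) = 0, hence they differ by an integer multiple of π. -/
lemma sin_eq_mul_cos (x : ℝ) :
    Real.sin (Real.arctan x) = x * Real.cos (Real.arctan x) := by
  rw [Real.sin_arctan, Real.cos_arctan]
  ring

theorem stmt8 (u : ℤ × ℤ → ℝ) (v : ℤ × ℤ → ℝ)
    (hv : ∀ n m : ℤ, v (n, m) = Real.arctan (u (n, m)))
    (hden : ∀ n m : ℤ,
      1 + 2 * u (n+1, m) * u (n, m+1) - u (n+1, m)^2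
        + (2 * u (n+1, m) - u (n, m+1) + u (n, m+1) * u (n+1, m)^2) * u (n, m) ≠ 0)
    (heq : ∀ n m : ℤ, u (n+1, m+1) =
      (2 * u (n+1, m) - u (n, m+1) + u (n, m+1) * u (n+1, m)^2
          - (1 + 2 * u (n+1, m) * u (n, m+1) - u (n+1, m)^2) * u (n, m))
        / (1 + 2 * u (n+1, m) * u (n, m+1) - u (n+1, m)^2
          + (2 * u (n+1, m) - u (n, m+1) + u (n, m+1) * u (n+1, m)^2) * u (n, m))) :
    ∀ n m : ℤ, ∃ p : ℤ,
      v (n, m) - 2 * v (n+1, m) + v (n, m+1) + v (n+1, m+1) = p * Real.pi := by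
  intro n m
  set x := u (n, m) with hx
  set y := u (n+1, m) with hy
  set z := u (n, m+1) with hz
  set w := u (n+1, m+1) with hw
  set N := 2 * y - z + z * y^2 - (1 + 2 * y * z - y^2) * x with hN
  set D := 1 + 2 * y * z - y^2 + (2 * y - z + z * y^2) * x with hD
  have hD0 : D ≠ 0 := hden n m
  have hwND : w = N / D := heq n m
  set a := Real.arctan x with ha
  set b := Real.arctan y with hb
  set c := Real.arctan z with hc
  set d := Real.arctan w with hd
  have hsa : Real.sin a = x * Real.cos a := sin_eq_mul_cos x
  have hsb : Real.sin b = y * Real.cos b := sin_eq_mul_cos y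
  have hsc : Real.sin c = z * Real.cos c := sin_eq_mul_cos z
  have hsd : Real.sin d = w * Real.cos d := sin_eq_mul_cos w
  have hb2 : (1 + y^2) * Real.cos b ^ 2 = 1 := by
    have h := Real.sin_sq_add_cos_sq b
    linear_combination h - (Real.sin b + y * Real.cos b) * hsb
  set K := Real.cos a * Real.cos b ^ 2 * Real.cos c with hK
  have hsθ : Real.sin (2*b - c - a) = K * N := by
    have e : (2 : ℝ) * b - c - a = (b + b) - c - a := by ring
    rw [e]
    simp only [Real.sin_sub, Real.cos_sub, Real.sin_add, Real.cos_add, hsa, hsb, hsc, hK, hN]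
    ring
  have hcθ : Real.cos (2*b - c - a) = K * D := by
    have e : (2 : ℝ) * b - c - a = (b + b) - c - a := by ring
    rw [e]
    simp only [Real.sin_sub, Real.cos_sub, Real.sin_add, Real.cos_add, hsa, hsb, hsc, hK, hD]
    ring
  -- key: sin (d - (2b - c - a)) = 0
  have hkey : Real.sin (d - (2*b - c - a)) = 0 := by
    rw [Real.sin_sub, hsθ, hcθ, hsd]
    have : w * D = N := by
      rw [hwND]; field_simp
    linear_combination (Real.cos d * K) * this
  rw [Real.sin_eq_zero_iff] at hkey
  obtain ⟨p, hp⟩ := hkey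
  refine ⟨p, ?_⟩
  rw [hv n m, hv (n+1) m, hv n (m+1), hv (n+1) (m+1)]
  rw [← hx, ← hy, ← hz, ← hw, ← ha, ← hb, ← hc, ← hd]
  linarith [hp]
end

section
/- Fix b ∈ ℝ with b ≠ -1/2, b ≠ -1. Define w : ℕ × ℤ → ℝ for m ≥ 1 by w_{n,m} = 1/(2^n (−1−2b)^m) − Σ_{κ=0}^{m−1} Σ_{ρ=max{n,κ}}^{n+m} C(m, ρ−n)·C(ρ, κ)·(−1)^{n+m−κ} b^{ρ−κ} / (b + 1/2)^{m−κ}, and w_{n,0} = 2^{−n}, w_{0,m} = 1. Then w satisfies w_{n,m} − w_{n+1,m} + b·w_{n,m+1} + w_{n+1,m+1} = 0 for all n ≥ 0 and m ≥ 0, and satisfies the boundary conditions w_{0,m} = 1 and w_{n,0} = 2^{−n}. -/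
/-- Explicit solution of the initial-boundary value problem for
`w − w₁₀ + b w₀₁ + w₁₁ = 0` with data `w_{n,0} = 2^{−n}`, `w_{0,m} = 1`. -/
noncomputable def wSol (b : ℝ) (n m : ℕ) : ℝ :=
  if m = 0 then (2 : ℝ)^(-(n : ℤ))
  else 1 / ((2 : ℝ)^n * (-1 - 2 * b)^m)
    - ∑ κ ∈ Finset.range m, ∑ ρ ∈ Finset.Icc (max n κ) (n + m),
        (Nat.choose m (ρ - n) : ℝ) * (Nat.choose ρ κ : ℝ) * (-1 : ℝ)^(n + m - κ)
          * b^(ρ - κ) / (b + 1/2)^(m - κ)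

/-! The inner sum over `ρ` in `wSol b n m` is the coefficient of `X ^ κ` in
`P n m = (X + b) ^ n * (X + b + 1) ^ m`, so that
`wSol b n m = 2⁻ⁿ yᵐ - (-1)ⁿ ∑_{κ<m} t^(m-κ) [X^κ] P n m` with `y = 1 / (-1 - 2b)` and
`t = -1 / (b + 1/2)`. The first term is a separable solution, since `1 - x + b y + x y = 0` for
`x = 1/2`. For the second, `P (n+1) m = (X + b) P n m` and `P n (m+1) = P n m + P (n+1) m` make
the equation telescope, whatever `t` is. At `n = 0` the binomial theorem evaluates the sum to
`(1 + t (b + 1))ᵐ - 1`, and this particular `t` turns it into `yᵐ - 1`, whence `w 0 m = 1`. -/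

open Polynomial Finset

namespace QuadGraph

section Algebra

variable {R : Type*} [CommRing R]

noncomputable def genPoly (b : R) (n m : ℕ) : R[X] := (X + C b) ^ n * (X + C b + 1) ^ m

lemma genPoly_succ_left (b : R) (n m : ℕ) : genPoly b (n + 1) m = (X + C b) * genPoly b n m := by
  rw [genPoly, genPoly]; ring

lemma genPoly_succ_right (b : R) (n m : ℕ) :
    genPoly b n (m + 1) = genPoly b n m + genPoly b (n + 1) m := by
  rw [genPoly, genPoly, genPoly]; ring

lemma coeff_X_add_C_mul_zero (b : R) (p : R[X]) : ((X + C b) * p).coeff 0 = b * p.coeff 0 := by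
  simp [add_mul]

lemma coeff_X_add_C_mul_succ (b : R) (p : R[X]) (k : ℕ) :
    ((X + C b) * p).coeff (k + 1) = p.coeff k + b * p.coeff (k + 1) := by
  simp [add_mul, coeff_X_mul]

lemma coeff_genPoly_zero_left (b : R) (m k : ℕ) :
    (genPoly b 0 m).coeff k = (b + 1) ^ (m - k) * m.choose k := by
  rw [genPoly, pow_zero, one_mul, add_assoc, ← C_1, ← C_add, coeff_X_add_C_pow]

lemma coeff_genPoly (b : R) (n m k : ℕ) :
    (genPoly b n m).coeff k
      = ∑ j ∈ range (m + 1), (m.choose j : R) * (n + j).choose k * b ^ (n + j - k) := by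
  rw [genPoly, add_pow _ 1, mul_sum, finsetSum_coeff]
  refine sum_congr rfl fun j _ => ?_
  rw [one_pow, mul_one, ← mul_assoc, ← pow_add, mul_comm, coeff_natCast_mul, coeff_X_add_C_pow]
  ring

noncomputable def lowerSum (t b : R) (n m : ℕ) : R :=
  ∑ k ∈ range m, t ^ (m - k) * (genPoly b n m).coeff k

lemma lowerSum_recurrence (t b : R) (n m : ℕ) :
    lowerSum t b n m + lowerSum t b (n + 1) m + b * lowerSum t b n (m + 1)
      - lowerSum t b (n + 1) (m + 1) = 0 := by
  have hshift : b * lowerSum t b n (m + 1) - lowerSum t b (n + 1) (m + 1)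
      = -∑ k ∈ range m, t ^ (m - k) * (genPoly b n (m + 1)).coeff k := by
    rw [lowerSum, lowerSum, mul_sum, ← sum_sub_distrib, sum_range_succ', genPoly_succ_left,
      coeff_X_add_C_mul_zero, ← sum_neg_distrib]
    simp only [coeff_X_add_C_mul_succ, Nat.add_sub_add_right]
    ring_nf
  have hsplit : lowerSum t b n m + lowerSum t b (n + 1) m
      = ∑ k ∈ range m, t ^ (m - k) * (genPoly b n (m + 1)).coeff k := by
    simp only [lowerSum, genPoly_succ_right, coeff_add, mul_add, sum_add_distrib]
  linear_combination hsplit + hshift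

lemma lowerSum_zero_left (t b : R) (m : ℕ) : lowerSum t b 0 m = (1 + t * (b + 1)) ^ m - 1 := by
  rw [lowerSum, add_pow, sum_range_succ]
  simp only [coeff_genPoly_zero_left, one_pow, mul_one, Nat.sub_self, pow_zero, Nat.choose_self,
    Nat.cast_one, mul_pow, add_sub_cancel_right]
  exact sum_congr rfl fun k _ => by ring

lemma sum_Icc_eq_coeff_genPoly (b : R) (n m k : ℕ) :
    ∑ ρ ∈ Icc (max n k) (n + m), (m.choose (ρ - n) : R) * ρ.choose k * b ^ (ρ - k)
      = (genPoly b n m).coeff k := by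
  have hzero : ∀ ρ ∈ Icc n (n + m), ρ ∉ Icc (max n k) (n + m) →
      (m.choose (ρ - n) : R) * ρ.choose k * b ^ (ρ - k) = 0 := by
    intro ρ hρ hρ'
    simp only [mem_Icc] at hρ hρ'
    simp [Nat.choose_eq_zero_of_lt (show ρ < k by omega)]
  rw [sum_subset (Icc_subset_Icc_left (le_max_left n k)) hzero, coeff_genPoly,
    ← Ico_add_one_right_eq_Icc, sum_Ico_eq_sum_range,
    show n + m + 1 - n = m + 1 by omega]
  simp only [Nat.add_sub_cancel_left]

def IsSolution (b : R) (w : ℕ → ℕ → R) : Prop :=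
  ∀ n m, w n m - w (n + 1) m + b * w n (m + 1) + w (n + 1) (m + 1) = 0

lemma IsSolution.sub {b : R} {v w : ℕ → ℕ → R} (hv : IsSolution b v) (hw : IsSolution b w) :
    IsSolution b (fun n m => v n m - w n m) :=
  fun n m => by linear_combination hv n m - hw n m

lemma isSolution_pow_mul_pow {b x y : R} (h : 1 - x + b * y + x * y = 0) :
    IsSolution b (fun n m => x ^ n * y ^ m) :=
  fun n m => by linear_combination x ^ n * y ^ m * h

lemma isSolution_lowerSum (t b : R) : IsSolution b (fun n m => (-1) ^ n * lowerSum t b n m) :=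
  fun n m => by linear_combination (-1) ^ n * lowerSum_recurrence t b n m

end Algebra

lemma wSol_eq_sub_lowerSum (b : ℝ) (n m : ℕ) :
    wSol b n m = 2⁻¹ ^ n * (-1 - 2 * b)⁻¹ ^ m - (-1) ^ n * lowerSum (-(b + 1 / 2)⁻¹) b n m := by
  rcases Nat.eq_zero_or_pos m with rfl | hm
  · simp [wSol, lowerSum, zpow_neg, inv_pow]
  rw [wSol, if_neg hm.ne', one_div, mul_inv, inv_pow, inv_pow, lowerSum, mul_sum]
  refine congrArg _ (sum_congr rfl fun k hk => ?_)
  have hsign : (-1 : ℝ) ^ (n + m - k) / (b + 1 / 2) ^ (m - k)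
      = (-1) ^ n * (-(b + 1 / 2)⁻¹) ^ (m - k) := by
    rw [Nat.add_sub_assoc (mem_range.1 hk).le, pow_add, div_eq_mul_inv, ← inv_pow, mul_assoc,
      ← mul_pow, neg_one_mul]
  rw [← sum_Icc_eq_coeff_genPoly, ← mul_assoc, ← hsign, mul_sum]
  exact sum_congr rfl fun ρ _ => by ring

end QuadGraph

open QuadGraph

theorem stmt11_general (b : ℝ) (hb2 : b ≠ -1/2) :
    (∀ n m : ℕ, wSol b n m - wSol b (n+1) m + b * wSol b n (m+1)
        + wSol b (n+1) (m+1) = 0)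
    ∧ (∀ m : ℕ, wSol b 0 m = 1)
    ∧ (∀ n : ℕ, wSol b n 0 = (2 : ℝ)^(-(n : ℤ))) := by
  have hu : (b + 1 / 2) * (b + 1 / 2)⁻¹ = 1 := mul_inv_cancel₀ fun h => hb2 (by linarith)
  have hy : (-1 - 2 * b) * (-1 - 2 * b)⁻¹ = 1 := mul_inv_cancel₀ fun h => hb2 (by linarith)
  refine ⟨?_, fun m => ?_, fun n => by simp [wSol]⟩
  · have hw : wSol b = fun n m => 2⁻¹ ^ n * (-1 - 2 * b)⁻¹ ^ m
        - (-1) ^ n * lowerSum (-(b + 1 / 2)⁻¹) b n m := funext₂ (wSol_eq_sub_lowerSum b)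
    rw [hw]
    exact (isSolution_pow_mul_pow (by linear_combination (-1 / 2 : ℝ) * hy)).sub
      (isSolution_lowerSum _ b)
  · -- both sides equal `-(b + 1/2)⁻¹ / 2`
    have hbase : 1 + -(b + 1 / 2)⁻¹ * (b + 1) = (-1 - 2 * b)⁻¹ := by
      linear_combination (-1 + (-1 - 2 * b)⁻¹) * hu + (b + 1 / 2)⁻¹ / 2 * hy
    rw [wSol_eq_sub_lowerSum, lowerSum_zero_left, hbase]
    ring

theorem stmt11 (b : ℝ) (hb2 : b ≠ -1/2) (hb1 : b ≠ -1) :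
    (∀ n m : ℕ, wSol b n m - wSol b (n+1) m + b * wSol b n (m+1)
        + wSol b (n+1) (m+1) = 0)
    ∧ (∀ m : ℕ, wSol b 0 m = 1)
    ∧ (∀ n : ℕ, wSol b n 0 = (2 : ℝ)^(-(n : ℤ))) :=
  stmt11_general b hb2
end

section
/- Let F(x, y, z) be a smooth function of three real variables with all three partial derivatives nonvanishing on a domain, representing a quad-graph equation u_{1,1} = F(u_{0,0}, u_{0,1}, u_{1,0}). Suppose there exists a smooth function f : ℝ → ℝ with f' never zero and constants a, b, c ≠ 0 such that f(u_{0,0}) + a f(u_{1,0}) + b f(u_{0,1}) + c f(F(u_{0,0}, u_{0,1}, u_{1,0})) = 0 identically on the domain. Then the Wronskian condition W_{(u_{0,1})}[F_{,u_{1,0}}, F_{,u_{0,0}}] := F_{,u_{1,0}}·∂_{u_{0,1}}F_{,u_{0,0}} − F_{,u_{0,0}}·∂_{u_{0,1}}F_{,u_{1,0}} = 0 holds identically on the domain. -/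
theorem stmt14 (F : ℝ → ℝ → ℝ → ℝ) (D : Set (ℝ × ℝ × ℝ)) (hD : IsOpen D)
    (hF : ContDiff ℝ (⊤ : ℕ∞) (fun p : ℝ × ℝ × ℝ => F p.1 p.2.1 p.2.2))
    -- nonvanishing of the three partial derivatives of F on D
    (hFx : ∀ p ∈ D, deriv (fun t => F t p.2.1 p.2.2) p.1 ≠ 0)
    (hFy : ∀ p ∈ D, deriv (fun t => F p.1 t p.2.2) p.2.1 ≠ 0)
    (hFz : ∀ p ∈ D, deriv (fun t => F p.1 p.2.1 t) p.2.2 ≠ 0)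
    (f : ℝ → ℝ) (hf : ContDiff ℝ (⊤ : ℕ∞) f) (hf' : ∀ x, deriv f x ≠ 0)
    (a b c : ℝ) (ha : a ≠ 0) (hb : b ≠ 0) (hc : c ≠ 0)
    -- the linearizing identity f(u₀₀) + a f(u₁₀) + b f(u₀₁) + c f(u₁₁) = 0
    (hlin : ∀ p ∈ D, f p.1 + a * f p.2.2 + b * f p.2.1
        + c * f (F p.1 p.2.1 p.2.2) = 0) :
    -- the Wronskian W_{(u₀₁)}[F_{,u₁₀}; F_{,u₀₀}] vanishes on D
    ∀ p ∈ D,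
      (deriv (fun t => F p.1 p.2.1 t) p.2.2)
          * deriv (fun s => deriv (fun t => F t s p.2.2) p.1) p.2.1
        - (deriv (fun t => F t p.2.1 p.2.2) p.1)
          * deriv (fun s => deriv (fun t => F p.1 s t) p.2.2) p.2.1 = 0 := by
  have hΦ : ContDiff ℝ (⊤ : ℕ∞) (fun q : ℝ × ℝ × ℝ => F q.1 q.2.1 q.2.2) := hF
  set Φ : ℝ × ℝ × ℝ → ℝ := fun q => F q.1 q.2.1 q.2.2 with hΦdef
  have hΦd : Differentiable ℝ Φ := hΦ.differentiable (by simp)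
  have hfd : Differentiable ℝ f := hf.differentiable (by simp)
  set px : ℝ × ℝ × ℝ → ℝ := fun q => fderiv ℝ Φ q (1, 0, 0) with hpx
  set pz : ℝ × ℝ × ℝ → ℝ := fun q => fderiv ℝ Φ q (0, 0, 1) with hpz
  have hpxC : ContDiff ℝ (⊤ : ℕ∞) px := (hΦ.fderiv_right (by simp)).clm_apply contDiff_const
  have hpzC : ContDiff ℝ (⊤ : ℕ∞) pz := (hΦ.fderiv_right (by simp)).clm_apply contDiff_const
  -- partial derivative lemmas
  have hx : ∀ q : ℝ × ℝ × ℝ, HasDerivAt (fun t => F t q.2.1 q.2.2) (px q) q.1 := by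
    intro q
    have hl : HasDerivAt (fun t : ℝ => ((t, q.2.1, q.2.2) : ℝ × ℝ × ℝ))
        ((1 : ℝ), (0 : ℝ), (0 : ℝ)) q.1 :=
      HasDerivAt.prodMk (hasDerivAt_id q.1) (hasDerivAt_const _ _)
    simpa [Function.comp_def] using (hΦd (q.1, q.2.1, q.2.2)).hasFDerivAt.comp_hasDerivAt q.1 hl
  have hz : ∀ q : ℝ × ℝ × ℝ, HasDerivAt (fun t => F q.1 q.2.1 t) (pz q) q.2.2 := by
    intro q
    have hl : HasDerivAt (fun t : ℝ => ((q.1, q.2.1, t) : ℝ × ℝ × ℝ))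
        ((0 : ℝ), (0 : ℝ), (1 : ℝ)) q.2.2 :=
      HasDerivAt.prodMk (hasDerivAt_const _ _) (HasDerivAt.prodMk (hasDerivAt_const _ _) (hasDerivAt_id _))
    simpa [Function.comp_def] using (hΦd (q.1, q.2.1, q.2.2)).hasFDerivAt.comp_hasDerivAt q.2.2 hl
  -- differentiate linearizing identity in x
  have hrel1 : ∀ q ∈ D, deriv f q.1 + c * (deriv f (Φ q) * px q) = 0 := by
    intro q hq
    have hcomp : HasDerivAt (fun t => f (F t q.2.1 q.2.2)) (deriv f (Φ q) * px q) q.1 :=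
      (hfd (Φ q)).hasDerivAt.comp q.1 (hx q)
    have hφ : HasDerivAt
        (fun t => f t + a * f q.2.2 + b * f q.2.1 + c * f (F t q.2.1 q.2.2))
        (deriv f q.1 + c * (deriv f (Φ q) * px q)) q.1 := by
      simpa [Pi.add_def] using (((hfd q.1).hasDerivAt.add_const (a * f q.2.2)).add_const
        (b * f q.2.1)).add (hcomp.const_mul c)
    have hopen : IsOpen {t : ℝ | ((t, q.2.1, q.2.2) : ℝ × ℝ × ℝ) ∈ D} :=
      hD.preimage (by fun_prop)
    have hev : ∀ᶠ t in nhds q.1,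
        f t + a * f q.2.2 + b * f q.2.1 + c * f (F t q.2.1 q.2.2) = 0 := by
      filter_upwards [hopen.mem_nhds (by simpa using hq)] with t ht
      simpa using hlin (t, q.2.1, q.2.2) ht
    have h0 : HasDerivAt
        (fun t => f t + a * f q.2.2 + b * f q.2.1 + c * f (F t q.2.1 q.2.2))
        0 q.1 := (hasDerivAt_const q.1 (0 : ℝ)).congr_of_eventuallyEq hev
    exact hφ.unique h0
  -- differentiate linearizing identity in z
  have hrel2 : ∀ q ∈ D, a * deriv f q.2.2 + c * (deriv f (Φ q) * pz q) = 0 := by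
    intro q hq
    have hcomp : HasDerivAt (fun t => f (F q.1 q.2.1 t)) (deriv f (Φ q) * pz q) q.2.2 :=
      (hfd (Φ q)).hasDerivAt.comp q.2.2 (hz q)
    have hφ : HasDerivAt
        (fun t => f q.1 + a * f t + b * f q.2.1 + c * f (F q.1 q.2.1 t))
        (a * deriv f q.2.2 + c * (deriv f (Φ q) * pz q)) q.2.2 := by
      have := ((((hfd q.2.2).hasDerivAt.const_mul a).const_add (f q.1)).add_const
        (b * f q.2.1)).add (hcomp.const_mul c)
      simpa [Pi.add_def] using this
    have hopen : IsOpen {t : ℝ | ((q.1, q.2.1, t) : ℝ × ℝ × ℝ) ∈ D} :=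
      hD.preimage (by fun_prop)
    have hev : ∀ᶠ t in nhds q.2.2,
        f q.1 + a * f t + b * f q.2.1 + c * f (F q.1 q.2.1 t) = 0 := by
      filter_upwards [hopen.mem_nhds (by simpa using hq)] with t ht
      simpa using hlin (q.1, q.2.1, t) ht
    have h0 : HasDerivAt
        (fun t => f q.1 + a * f t + b * f q.2.1 + c * f (F q.1 q.2.1 t))
        0 q.2.2 := (hasDerivAt_const q.2.2 (0 : ℝ)).congr_of_eventuallyEq hev
    exact hφ.unique h0
  -- combined relation
  have hrel : ∀ q ∈ D, pz q * deriv f q.1 - a * deriv f q.2.2 * px q = 0 := by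
    intro q hq
    have h1 := hrel1 q hq
    have h2 := hrel2 q hq
    have hg : c * deriv f (Φ q) ≠ 0 := mul_ne_zero hc (hf' _)
    have key : (c * deriv f (Φ q)) * (pz q * deriv f q.1 - a * deriv f q.2.2 * px q)
        = deriv f q.1 * (a * deriv f q.2.2 + c * (deriv f (Φ q) * pz q))
          - a * deriv f q.2.2 * (deriv f q.1 + c * (deriv f (Φ q) * px q)) := by ring
    rw [h1, h2] at key
    simpa using (mul_eq_zero.mp (by linarith [key])).resolve_left hg
  -- now fix p and differentiate hrel in the middle variable
  intro p hp
  set u : ℝ → ℝ := fun s => px (p.1, s, p.2.2) with hu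
  set v : ℝ → ℝ := fun s => pz (p.1, s, p.2.2) with hv
  have hlineC : ContDiff ℝ (⊤ : ℕ∞) (fun s : ℝ => ((p.1, s, p.2.2) : ℝ × ℝ × ℝ)) := by fun_prop
  have huD : Differentiable ℝ u := (hpxC.comp hlineC).differentiable (by simp)
  have hvD : Differentiable ℝ v := (hpzC.comp hlineC).differentiable (by simp)
  have hH : HasDerivAt (fun s => v s * deriv f p.1 - a * deriv f p.2.2 * u s)
      (deriv v p.2.1 * deriv f p.1 - a * deriv f p.2.2 * deriv u p.2.1) p.2.1 :=
    ((hvD p.2.1).hasDerivAt.mul_const _).sub ((huD p.2.1).hasDerivAt.const_mul _)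
  have hopen : IsOpen {s : ℝ | ((p.1, s, p.2.2) : ℝ × ℝ × ℝ) ∈ D} :=
    hD.preimage (by fun_prop)
  have hev : ∀ᶠ s in nhds p.2.1,
      v s * deriv f p.1 - a * deriv f p.2.2 * u s = 0 := by
    filter_upwards [hopen.mem_nhds (by simpa using hp)] with s hs
    simpa using hrel (p.1, s, p.2.2) hs
  have h0 : HasDerivAt (fun s => v s * deriv f p.1 - a * deriv f p.2.2 * u s)
      0 p.2.1 := (hasDerivAt_const p.2.1 (0 : ℝ)).congr_of_eventuallyEq hev
  have hder : deriv v p.2.1 * deriv f p.1 - a * deriv f p.2.2 * deriv u p.2.1 = 0 :=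
    hH.unique h0
  -- identify the derivatives in the goal
  have e1 : deriv (fun t => F p.1 p.2.1 t) p.2.2 = pz p := (hz p).deriv
  have e2 : deriv (fun t => F t p.2.1 p.2.2) p.1 = px p := (hx p).deriv
  have e3 : deriv (fun s => deriv (fun t => F t s p.2.2) p.1) p.2.1 = deriv u p.2.1 := by
    congr 1
    funext s
    exact (hx (p.1, s, p.2.2)).deriv
  have e4 : deriv (fun s => deriv (fun t => F p.1 s t) p.2.2) p.2.1 = deriv v p.2.1 := by
    congr 1
    funext s
    exact (hz (p.1, s, p.2.2)).deriv
  rw [e1, e2, e3, e4]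
  have hrelp := hrel p hp
  have hup : u p.2.1 = px p := by simp [hu]
  have hvp : v p.2.1 = pz p := by simp [hv]
  have hgx : deriv f p.1 ≠ 0 := hf' _
  have key : deriv f p.1 * (pz p * deriv u p.2.1 - px p * deriv v p.2.1)
      = deriv u p.2.1 * (pz p * deriv f p.1 - a * deriv f p.2.2 * px p)
        - px p * (deriv v p.2.1 * deriv f p.1 - a * deriv f p.2.2 * deriv u p.2.1) := by
    ring
  rw [hrelp, hder] at key
  simpa using (mul_eq_zero.mp (by linarith [key])).resolve_left hgx
end
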